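/- For every α ∈ (0,∞] and every probability measure μ on a measurable space (Y,𝒴), the map ν ↦ D_α(μ‖ν), defined on the set of finite (nonnegative) measures on (Y,𝒴) with values in (−∞,∞] and with D_α(μ‖0) = ∞, is lower semicontinuous with respect to the total variation norm topology. -/

import Mathlib

open MeasureTheory Filter ENNReal
open scoped Classical
open scoped Topology

variable {Y : Type*} [MeasurableSpace Y]

/-- Order-`α` Rényi divergence `D_α(μ‖ν)` between measures on `Y`, with the
Kullback–Leibler divergence at `α = 1` and the max-divergence at `α = ∞`;
the reference measure is taken to be `μ + ν` (in particular `D_α(μ‖0) = ∞`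
for a probability measure `μ`). -/
noncomputable def renyiDiv (α : ℝ≥0∞) (μ ν : Measure Y) : EReal :=
  if α = 1 then
    (if μ ≪ ν ∧ Integrable (llr μ ν) μ then ((∫ y, llr μ ν y ∂μ : ℝ) : EReal) else ⊤)
  else if α = ∞ then
    ENNReal.log (essSup (fun y => μ.rnDeriv (μ + ν) y / ν.rnDeriv (μ + ν) y) (μ + ν))
  else
    (((α.toReal - 1)⁻¹ : ℝ) : EReal) *
      ENNReal.log
        (∫⁻ y, μ.rnDeriv (μ + ν) y ^ α.toReal * ν.rnDeriv (μ + ν) y ^ (1 - α.toReal) ∂(μ + ν))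

/-- The total variation norm `‖μ - ν‖ = ∫ |dμ/dρ - dν/dρ| dρ` for `ρ = μ + ν`. -/
noncomputable def tvDist (μ ν : Measure Y) : ℝ :=
  (∫⁻ y, ‖(μ.rnDeriv (μ + ν) y).toReal - (ν.rnDeriv (μ + ν) y).toReal‖₊ ∂(μ + ν)).toReal

namespace RenyiAux

/-- Symmetric distance on `ℝ≥0∞` via truncated subtraction. -/
noncomputable def dd (a b : ℝ≥0∞) : ℝ≥0∞ := (a - b) + (b - a)

lemma le_add_dd (a b : ℝ≥0∞) : a ≤ b + dd a b := by
  calc a ≤ (a - b) + b := le_tsub_add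
  _ ≤ b + dd a b := by rw [dd]; rw [add_comm]; gcongr; exact le_self_add

lemma dd_comm (a b : ℝ≥0∞) : dd a b = dd b a := by rw [dd, dd, add_comm]

lemma dd_le_add (a b : ℝ≥0∞) : dd a b ≤ a + b := by
  rw [dd]; gcongr <;> simp [tsub_le_iff_right, le_add_left, le_add_right]

lemma dd_eq_nnnorm {a b : ℝ≥0∞} (ha : a ≠ ⊤) (hb : b ≠ ⊤) :
    (‖a.toReal - b.toReal‖₊ : ℝ≥0∞) = dd a b := by
  rcases le_total a b with h | h
  · rw [dd, tsub_eq_zero_of_le h, zero_add, ← ENNReal.ofReal_toReal (a := b - a) (by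
      simp [ha, hb, ENNReal.sub_ne_top]),
      ENNReal.toReal_sub_of_le h hb]
    rw [show a.toReal - b.toReal = -(b.toReal - a.toReal) by ring, nnnorm_neg, ← enorm_eq_nnnorm,
      Real.enorm_eq_ofReal (by
        have := ENNReal.toReal_le_toReal ha hb |>.mpr h
        linarith)]
  · rw [dd, tsub_eq_zero_of_le h, add_zero, ← ENNReal.ofReal_toReal (a := a - b) (by
      simp [ha, ENNReal.sub_ne_top]),
      ENNReal.toReal_sub_of_le h ha, ← enorm_eq_nnnorm,
      Real.enorm_eq_ofReal (by
        have := ENNReal.toReal_le_toReal hb ha |>.mpr h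
        linarith)]

lemma measurable_dd {f g : Y → ℝ≥0∞} (hf : Measurable f) (hg : Measurable g) :
    Measurable fun y => dd (f y) (g y) :=
  ((hf.sub hg).add (hg.sub hf))

lemma eq_top_of_forall_ofReal_le {x : ℝ≥0∞} (h : ∀ r : ℝ, ENNReal.ofReal r ≤ x) : x = ⊤ := by
  by_contra hx
  have h1 := h (x.toReal + 1)
  have h2 : x < ENNReal.ofReal (x.toReal + 1) := by
    rw [ENNReal.lt_ofReal_iff_toReal_lt hx]; linarith
  exact absurd (h1.trans_lt h2) (lt_irrefl _)

/-- If `σ S = 0` then the density of `σ` vanishes a.e. on `S`. -/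
lemma rnDeriv_ae_zero_on {σ ρ : Measure Y} [IsFiniteMeasure σ] [IsFiniteMeasure ρ]
    (hσρ : σ ≪ ρ) {S : Set Y} (hS : MeasurableSet S) (h : σ S = 0) :
    ∀ᵐ y ∂ρ, y ∈ S → σ.rnDeriv ρ y = 0 := by
  have h0 : ∫⁻ y in S, σ.rnDeriv ρ y ∂ρ = 0 := by
    rw [Measure.setLIntegral_rnDeriv hσρ]; exact h
  have := (setLIntegral_eq_zero_iff hS (Measure.measurable_rnDeriv σ ρ)).mp h0
  simpa using this


variable {μ ν ρ : Measure Y}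

lemma mul_dd {w a b : ℝ≥0∞} (hw : w ≠ ⊤) :
    w * dd a b = dd (a * w) (b * w) := by
  rw [dd, dd, ← ENNReal.sub_mul (fun _ _ => hw), ← ENNReal.sub_mul (fun _ _ => hw),
    ← add_mul, mul_comm]

/-- Change of reference measure for the `L¹` distance between densities. -/
lemma lintegral_dd_change [IsFiniteMeasure μ] [IsFiniteMeasure ν] [IsFiniteMeasure ρ]
    (hμ : μ ≪ ρ) (hν : ν ≪ ρ) :
    ∫⁻ y, dd (μ.rnDeriv ρ y) (ν.rnDeriv ρ y) ∂ρ
      = ∫⁻ y, dd (μ.rnDeriv (μ + ν) y) (ν.rnDeriv (μ + ν) y) ∂(μ + ν) := by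
  set σ := μ + ν with hσ
  have hσρ : σ ≪ ρ := by
    refine Measure.AbsolutelyContinuous.mk fun s hs h0 => ?_
    simp [hσ, Measure.coe_add, hμ h0, hν h0]
  have hμσ : μ ≪ σ := Measure.absolutelyContinuous_of_le (Measure.le_add_right le_rfl)
  have hνσ : ν ≪ σ := Measure.absolutelyContinuous_of_le (Measure.le_add_left le_rfl)
  rw [← lintegral_rnDeriv_mul hσρ
    ((measurable_dd (Measure.measurable_rnDeriv _ _) (Measure.measurable_rnDeriv _ _)).aemeasurable)]
  refine lintegral_congr_ae ?_
  filter_upwards [Measure.rnDeriv_mul_rnDeriv hμσ (κ := ρ), Measure.rnDeriv_mul_rnDeriv hνσ (κ := ρ),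
    Measure.rnDeriv_lt_top σ ρ] with y h1 h2 h3
  rw [← h1, ← h2, Pi.mul_apply, Pi.mul_apply, ← mul_dd h3.ne, mul_comm]

lemma lintegral_dd_lt_top [IsFiniteMeasure μ] [IsFiniteMeasure ν] [IsFiniteMeasure ρ]
    (hμ : μ ≪ ρ) (hν : ν ≪ ρ) :
    ∫⁻ y, dd (μ.rnDeriv ρ y) (ν.rnDeriv ρ y) ∂ρ < ⊤ := by
  refine lt_of_le_of_lt (lintegral_mono fun y => dd_le_add _ _) ?_
  rw [lintegral_add_left (Measure.measurable_rnDeriv _ _), Measure.lintegral_rnDeriv hμ,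
    Measure.lintegral_rnDeriv hν]
  exact ENNReal.add_lt_top.mpr ⟨measure_lt_top _ _, measure_lt_top _ _⟩

/-- `tvDist` in terms of densities with respect to any common reference measure. -/
lemma ofReal_tvDist [IsFiniteMeasure μ] [IsFiniteMeasure ν] [IsFiniteMeasure ρ]
    (hμ : μ ≪ ρ) (hν : ν ≪ ρ) :
    ENNReal.ofReal (tvDist μ ν)
      = ∫⁻ y, dd (μ.rnDeriv ρ y) (ν.rnDeriv ρ y) ∂ρ := by
  have h1 : ∫⁻ y, (‖(μ.rnDeriv (μ + ν) y).toReal - (ν.rnDeriv (μ + ν) y).toReal‖₊ : ℝ≥0∞) ∂(μ + ν)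
      = ∫⁻ y, dd (μ.rnDeriv (μ + ν) y) (ν.rnDeriv (μ + ν) y) ∂(μ + ν) := by
    refine lintegral_congr_ae ?_
    filter_upwards [Measure.rnDeriv_lt_top μ (μ + ν), Measure.rnDeriv_lt_top ν (μ + ν)]
      with y h1 h2
    exact dd_eq_nnnorm h1.ne h2.ne
  rw [tvDist, ENNReal.ofReal_toReal, h1, lintegral_dd_change hμ hν]
  rw [h1, ← lintegral_dd_change hμ hν]
  exact (lintegral_dd_lt_top hμ hν).ne


lemma mul_rpow_aux {a : ℝ} (ha : 0 < a) {u v w : ℝ≥0∞} (hw : w ≠ ⊤)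
    (hu : w ≠ 0 → u ≠ ⊤) (hv : w ≠ 0 → v ≠ ⊤) :
    (u * w) ^ a * (v * w) ^ (1 - a) = w * (u ^ a * v ^ (1 - a)) := by
  rcases eq_or_ne w 0 with rfl | hw0
  · simp [ENNReal.zero_rpow_of_pos ha]
  · rw [ENNReal.mul_rpow_of_ne_top (hu hw0) hw, ENNReal.mul_rpow_of_ne_top (hv hw0) hw]
    have hww : w ^ a * w ^ (1 - a) = w := by
      rw [← ENNReal.rpow_add _ _ hw0 hw]; simp
    calc u ^ a * w ^ a * (v ^ (1 - a) * w ^ (1 - a))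
        = (w ^ a * w ^ (1 - a)) * (u ^ a * v ^ (1 - a)) := by ring
      _ = w * (u ^ a * v ^ (1 - a)) := by rw [hww]

lemma lintegral_rpow_change {a : ℝ} (ha : 0 < a)
    [IsFiniteMeasure μ] [IsFiniteMeasure ν] [IsFiniteMeasure ρ]
    (hμ : μ ≪ ρ) (hν : ν ≪ ρ) :
    ∫⁻ y, μ.rnDeriv (μ + ν) y ^ a * ν.rnDeriv (μ + ν) y ^ (1 - a) ∂(μ + ν)
      = ∫⁻ y, μ.rnDeriv ρ y ^ a * ν.rnDeriv ρ y ^ (1 - a) ∂ρ := by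
  set σ := μ + ν with hσ
  have hσρ : σ ≪ ρ := by
    refine Measure.AbsolutelyContinuous.mk fun s hs h0 => ?_
    simp [hσ, Measure.coe_add, hμ h0, hν h0]
  have hμσ : μ ≪ σ := Measure.absolutelyContinuous_of_le (Measure.le_add_right le_rfl)
  have hνσ : ν ≪ σ := Measure.absolutelyContinuous_of_le (Measure.le_add_left le_rfl)
  have hmeas : Measurable fun y => μ.rnDeriv σ y ^ a * ν.rnDeriv σ y ^ (1 - a) :=
    ((ENNReal.continuous_rpow_const.measurable).comp (Measure.measurable_rnDeriv μ σ)).mul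
      ((ENNReal.continuous_rpow_const.measurable).comp (Measure.measurable_rnDeriv ν σ))
  rw [← lintegral_rnDeriv_mul hσρ hmeas.aemeasurable]
  have hSu : σ {y | μ.rnDeriv σ y = ⊤} = 0 := by
    have h := Measure.rnDeriv_lt_top μ σ
    rw [ae_iff] at h
    simpa [lt_top_iff_ne_top] using h
  have hSv : σ {y | ν.rnDeriv σ y = ⊤} = 0 := by
    have h := Measure.rnDeriv_lt_top ν σ
    rw [ae_iff] at h
    simpa [lt_top_iff_ne_top] using h
  have hmu : MeasurableSet {y | μ.rnDeriv σ y = ⊤} :=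
    Measure.measurable_rnDeriv μ σ (measurableSet_singleton ⊤)
  have hmv : MeasurableSet {y | ν.rnDeriv σ y = ⊤} :=
    Measure.measurable_rnDeriv ν σ (measurableSet_singleton ⊤)
  refine (lintegral_congr_ae ?_).symm
  filter_upwards [Measure.rnDeriv_mul_rnDeriv hμσ (κ := ρ),
    Measure.rnDeriv_mul_rnDeriv hνσ (κ := ρ), Measure.rnDeriv_lt_top σ ρ,
    rnDeriv_ae_zero_on hσρ hmu hSu, rnDeriv_ae_zero_on hσρ hmv hSv] with y h1 h2 h3 h4 h5
  rw [← h1, ← h2, Pi.mul_apply, Pi.mul_apply]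
  exact mul_rpow_aux ha h3.ne (fun hw0 h => hw0 (h4 h)) (fun hw0 h => hw0 (h5 h))

lemma essSup_div_change [IsFiniteMeasure μ] [IsFiniteMeasure ν] [IsFiniteMeasure ρ]
    (hμ : μ ≪ ρ) (hν : ν ≪ ρ) :
    essSup (fun y => μ.rnDeriv (μ + ν) y / ν.rnDeriv (μ + ν) y) (μ + ν)
      = essSup (fun y => μ.rnDeriv ρ y / ν.rnDeriv ρ y) ρ := by
  set σ := μ + ν with hσ
  have hσρ : σ ≪ ρ := by
    refine Measure.AbsolutelyContinuous.mk fun s hs h0 => ?_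
    simp [hσ, Measure.coe_add, hμ h0, hν h0]
  have hμσ : μ ≪ σ := Measure.absolutelyContinuous_of_le (Measure.le_add_right le_rfl)
  have hνσ : ν ≪ σ := Measure.absolutelyContinuous_of_le (Measure.le_add_left le_rfl)
  have h1 := Measure.rnDeriv_mul_rnDeriv hμσ (κ := ρ)
  have h2 := Measure.rnDeriv_mul_rnDeriv hνσ (κ := ρ)
  have h3 := Measure.rnDeriv_lt_top σ ρ
  refine le_antisymm ?_ ?_
  · -- essSup over σ ≤ essSup over ρ
    refine essSup_le_of_ae_le _ ?_
    have hw0 : ∀ᵐ y ∂σ, σ.rnDeriv ρ y ≠ 0 := by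
      have hset : MeasurableSet {y | σ.rnDeriv ρ y = 0} :=
        Measure.measurable_rnDeriv σ ρ (measurableSet_singleton 0)
      have : σ {y | σ.rnDeriv ρ y = 0} = 0 := by
        rw [← Measure.setLIntegral_rnDeriv hσρ]
        refine (setLIntegral_congr_fun hset (fun y hy => hy)).trans ?_
        simp
      rw [ae_iff]
      simpa using this
    filter_upwards [hσρ.ae_le h1, hσρ.ae_le h2, hσρ.ae_le h3, hw0,
      hσρ.ae_le (_root_.ae_le_essSup (f := fun y => μ.rnDeriv ρ y / ν.rnDeriv ρ y) (μ := ρ))]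
      with y h1 h2 h3 h4 h5
    rw [← h1, ← h2, Pi.mul_apply, Pi.mul_apply,
      ENNReal.mul_div_mul_right _ _ h4 h3.ne] at h5
    exact h5
  · refine essSup_le_of_ae_le _ ?_
    set M := essSup (fun y => μ.rnDeriv σ y / ν.rnDeriv σ y) σ with hM
    have hNmeas : MeasurableSet {y | ¬ (μ.rnDeriv σ y / ν.rnDeriv σ y ≤ M)} := by
      simp only [not_le]
      exact measurableSet_lt measurable_const
        ((Measure.measurable_rnDeriv μ σ).div (Measure.measurable_rnDeriv ν σ))
    have hN : σ {y | ¬ (μ.rnDeriv σ y / ν.rnDeriv σ y ≤ M)} = 0 := by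
      rw [← ae_iff]
      exact _root_.ae_le_essSup
    filter_upwards [h1, h2, h3, rnDeriv_ae_zero_on hσρ hNmeas hN] with y h1 h2 h3 h4
    rcases eq_or_ne (σ.rnDeriv ρ y) 0 with hw | hw
    · rw [← h1, Pi.mul_apply, hw, mul_zero, ENNReal.zero_div]
      exact zero_le
    · have h5 : μ.rnDeriv σ y / ν.rnDeriv σ y ≤ M := by
        by_contra hc
        exact hw (h4 hc)
      rw [← h1, ← h2, Pi.mul_apply, Pi.mul_apply,
        ENNReal.mul_div_mul_right _ _ hw h3.ne]
      exact h5


/-- Integrand for the Kullback-Leibler divergence, normalized to be nonnegative. -/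
noncomputable def klFun (x z : ℝ≥0∞) : ℝ≥0∞ :=
  if x = 0 then z
  else if z = 0 then ⊤
  else ENNReal.ofReal (x.toReal * Real.log (x.toReal / z.toReal) - x.toReal + z.toReal)

lemma klReal_nonneg {t s : ℝ} (ht : 0 < t) (hs : 0 < s) :
    0 ≤ t * Real.log (t / s) - t + s := by
  have h1 : Real.log (s / t) ≤ s / t - 1 := Real.log_le_sub_one_of_pos (by positivity)
  have h2 : t * Real.log (s / t) ≤ t * (s / t - 1) := mul_le_mul_of_nonneg_left h1 ht.le
  have h3 : t * (s / t - 1) = s - t := by field_simp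
  have h4 : Real.log (t / s) = - Real.log (s / t) := by
    rw [← Real.log_inv]
    congr 1
    field_simp
  rw [h4]
  nlinarith

lemma measurable_klFun {f g : Y → ℝ≥0∞} (hf : Measurable f) (hg : Measurable g) :
    Measurable fun y => klFun (f y) (g y) := by
  unfold klFun
  refine Measurable.ite (hf (measurableSet_singleton 0)) hg ?_
  refine Measurable.ite (hg (measurableSet_singleton 0)) measurable_const ?_
  exact ENNReal.measurable_ofReal.comp
    (((hf.ennreal_toReal.mul
      (Real.measurable_log.comp (hf.ennreal_toReal.div hg.ennreal_toReal))).sub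
        hf.ennreal_toReal).add hg.ennreal_toReal)

lemma coe_ennreal_eq {x : ℝ≥0∞} (hx : x ≠ ⊤) : (x : EReal) = ((x.toReal : ℝ) : EReal) := by
  conv_lhs => rw [← ENNReal.ofReal_toReal hx]
  rw [EReal.coe_ennreal_ofReal, max_eq_left ENNReal.toReal_nonneg]

/-- KL divergence in terms of densities with respect to a common reference measure. -/
lemma kl_eq [IsProbabilityMeasure μ] [IsFiniteMeasure ν] [IsFiniteMeasure ρ]
    (hμ : μ ≪ ρ) (hν : ν ≪ ρ) :
    renyiDiv 1 μ ν
      = ((∫⁻ y, klFun (μ.rnDeriv ρ y) (ν.rnDeriv ρ y) ∂ρ : ℝ≥0∞) : EReal)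
        + (((1 : ℝ) - (ν Set.univ).toReal : ℝ) : EReal) := by
  have hmf := Measure.measurable_rnDeriv μ ρ
  have hmg := Measure.measurable_rnDeriv ν ρ
  by_cases hac : μ ≪ ν
  · -- absolutely continuous case
    have hffin := Measure.rnDeriv_lt_top μ ρ
    have hgfin := Measure.rnDeriv_lt_top ν ρ
    have hgz : ∀ᵐ y ∂ρ, μ.rnDeriv ρ y ≠ 0 → ν.rnDeriv ρ y ≠ 0 := by
      have hset : MeasurableSet {y | ν.rnDeriv ρ y = 0} := hmg (measurableSet_singleton 0)
      have hν0 : ν {y | ν.rnDeriv ρ y = 0} = 0 := by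
        rw [← Measure.setLIntegral_rnDeriv hν]
        refine (setLIntegral_congr_fun hset (fun y hy => hy)).trans ?_
        simp
      have hμ0 : μ {y | ν.rnDeriv ρ y = 0} = 0 := hac hν0
      filter_upwards [rnDeriv_ae_zero_on hμ hset hμ0] with y h1 h2 h3
      exact h2 (h1 h3)
    set W : Y → ℝ := fun y =>
      (μ.rnDeriv ρ y).toReal * Real.log ((μ.rnDeriv ρ y).toReal / (ν.rnDeriv ρ y).toReal)
      with hW_def
    set F : Y → ℝ := fun y => W y - (μ.rnDeriv ρ y).toReal + (ν.rnDeriv ρ y).toReal with hF_def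
    have hWmeas : Measurable W :=
      hmf.ennreal_toReal.mul
        (Real.measurable_log.comp (hmf.ennreal_toReal.div hmg.ennreal_toReal))
    have hFmeas : Measurable F := (hWmeas.sub hmf.ennreal_toReal).add hmg.ennreal_toReal
    have hW : (fun y => (μ.rnDeriv ρ y).toReal • llr μ ν y) =ᵐ[ρ] W := by
      have hchain := Measure.rnDeriv_mul_rnDeriv hac (κ := ρ)
      filter_upwards [hchain, hgfin, hgz] with y h1 h3 h4
      by_cases hf0 : μ.rnDeriv ρ y = 0
      · simp [hW_def, hf0]
      · have hg0 := h4 hf0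
        have hd : μ.rnDeriv ν y = μ.rnDeriv ρ y / ν.rnDeriv ρ y := by
          rw [← h1, Pi.mul_apply, mul_div_assoc, ENNReal.div_self hg0 h3.ne, mul_one]
        simp only [llr_def, smul_eq_mul, hW_def]
        rw [hd, ENNReal.toReal_div]
    have hIntEquiv : Integrable (llr μ ν) μ ↔ Integrable W ρ := by
      rw [← integrable_rnDeriv_smul_iff hμ]
      exact integrable_congr hW
    have hint_f : Integrable (fun y => (μ.rnDeriv ρ y).toReal) ρ :=
      Measure.integrable_toReal_rnDeriv
    have hint_g : Integrable (fun y => (ν.rnDeriv ρ y).toReal) ρ :=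
      Measure.integrable_toReal_rnDeriv
    have hInt2 : Integrable W ρ ↔ Integrable F ρ := by
      constructor
      · intro h
        exact (h.sub hint_f).add hint_g
      · intro h
        have : Integrable (fun y => F y + (μ.rnDeriv ρ y).toReal - (ν.rnDeriv ρ y).toReal) ρ :=
          (h.add hint_f).sub hint_g
        refine this.congr (ae_of_all _ fun y => ?_)
        simp only [hF_def]
        ring
    have hF_nonneg : 0 ≤ᵐ[ρ] F := by
      filter_upwards [hffin, hgfin, hgz] with y h1 h2 h3
      by_cases hf0 : μ.rnDeriv ρ y = 0
      · simp [hF_def, hW_def, hf0, ENNReal.toReal_nonneg]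
      · exact klReal_nonneg (ENNReal.toReal_pos hf0 h1.ne) (ENNReal.toReal_pos (h3 hf0) h2.ne)
    have hklF : (fun y => klFun (μ.rnDeriv ρ y) (ν.rnDeriv ρ y)) =ᵐ[ρ]
        fun y => ENNReal.ofReal (F y) := by
      filter_upwards [hgfin, hgz] with y h2 h3
      by_cases hf0 : μ.rnDeriv ρ y = 0
      · rw [klFun, if_pos hf0]
        simp only [hF_def, hW_def, hf0, ENNReal.toReal_zero, zero_mul, zero_sub, neg_zero,
          zero_add, sub_zero]
        rw [ENNReal.ofReal_toReal h2.ne]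
      · rw [klFun, if_neg hf0, if_neg (h3 hf0)]
    have hKrw : ∫⁻ y, klFun (μ.rnDeriv ρ y) (ν.rnDeriv ρ y) ∂ρ
        = ∫⁻ y, ENNReal.ofReal (F y) ∂ρ := lintegral_congr_ae hklF
    have hIntF_iff : Integrable F ρ ↔ ∫⁻ y, ENNReal.ofReal (F y) ∂ρ ≠ ⊤ := by
      constructor
      · intro h
        exact ((hasFiniteIntegral_iff_ofReal hF_nonneg).mp h.2).ne
      · intro h
        exact ⟨hFmeas.aestronglyMeasurable,
          (hasFiniteIntegral_iff_ofReal hF_nonneg).mpr h.lt_top⟩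
    by_cases hInt : Integrable (llr μ ν) μ
    · -- integrable case
      have hIntW : Integrable W ρ := hIntEquiv.mp hInt
      have hIntF : Integrable F ρ := hInt2.mp hIntW
      have hKne : ∫⁻ y, klFun (μ.rnDeriv ρ y) (ν.rnDeriv ρ y) ∂ρ ≠ ⊤ := by
        rw [hKrw]; exact hIntF_iff.mp hIntF
      rw [renyiDiv, if_pos rfl, if_pos ⟨hac, hInt⟩]
      have hI1 : ∫ y, llr μ ν y ∂μ = ∫ y, W y ∂ρ := by
        rw [← integral_rnDeriv_smul hμ]
        exact integral_congr_ae hW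
      have hI2 : ∫ y, W y ∂ρ
          = (∫ y, F y ∂ρ) + (∫ y, (μ.rnDeriv ρ y).toReal ∂ρ)
            - ∫ y, (ν.rnDeriv ρ y).toReal ∂ρ := by
        have e1 : ∫ y, (F y + (μ.rnDeriv ρ y).toReal) - (ν.rnDeriv ρ y).toReal ∂ρ
            = (∫ y, F y + (μ.rnDeriv ρ y).toReal ∂ρ) - ∫ y, (ν.rnDeriv ρ y).toReal ∂ρ :=
          integral_sub (hIntF.add hint_f) hint_g
        have e2 : ∫ y, F y + (μ.rnDeriv ρ y).toReal ∂ρ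
            = (∫ y, F y ∂ρ) + ∫ y, (μ.rnDeriv ρ y).toReal ∂ρ := integral_add hIntF hint_f
        calc ∫ y, W y ∂ρ
            = ∫ y, (F y + (μ.rnDeriv ρ y).toReal) - (ν.rnDeriv ρ y).toReal ∂ρ :=
              integral_congr_ae (ae_of_all _ fun y => by simp only [hF_def]; ring)
          _ = (∫ y, F y + (μ.rnDeriv ρ y).toReal ∂ρ) - ∫ y, (ν.rnDeriv ρ y).toReal ∂ρ := e1
          _ = (∫ y, F y ∂ρ) + (∫ y, (μ.rnDeriv ρ y).toReal ∂ρ)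
              - ∫ y, (ν.rnDeriv ρ y).toReal ∂ρ := by rw [e2]
      have hI3 : ∫ y, (μ.rnDeriv ρ y).toReal ∂ρ = 1 := by
        rw [Measure.integral_toReal_rnDeriv hμ]
        simp
      have hI4 : ∫ y, (ν.rnDeriv ρ y).toReal ∂ρ = (ν Set.univ).toReal :=
        Measure.integral_toReal_rnDeriv hν
      have hI5 : ∫ y, F y ∂ρ
          = (∫⁻ y, klFun (μ.rnDeriv ρ y) (ν.rnDeriv ρ y) ∂ρ).toReal := by
        rw [integral_eq_lintegral_of_nonneg_ae hF_nonneg hFmeas.aestronglyMeasurable, hKrw]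
      rw [hI1, hI2, hI3, hI4, hI5, coe_ennreal_eq hKne, ← EReal.coe_add]
      congr 1
      ring
    · -- non-integrable case
      rw [renyiDiv, if_pos rfl, if_neg (fun h => hInt h.2)]
      have hK : ∫⁻ y, klFun (μ.rnDeriv ρ y) (ν.rnDeriv ρ y) ∂ρ = ⊤ := by
        by_contra hK
        rw [hKrw] at hK
        exact hInt (hIntEquiv.mpr (hInt2.mpr (hIntF_iff.mpr hK)))
      rw [hK, EReal.coe_ennreal_top, EReal.top_add_coe]
  · -- not absolutely continuous
    rw [renyiDiv, if_pos rfl, if_neg (fun h => hac h.1)]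
    obtain ⟨s, hs0, hs1⟩ : ∃ s, ν s = 0 ∧ μ s ≠ 0 := by
      by_contra h
      push_neg at h
      exact hac (Measure.AbsolutelyContinuous.mk fun s _ h0 => h s h0)
    set A := toMeasurable ν s with hA_def
    have hA : MeasurableSet A := measurableSet_toMeasurable ν s
    have hνA : ν A = 0 := by rw [hA_def, measure_toMeasurable]; exact hs0
    have hμA : μ A ≠ 0 := fun h => hs1 (measure_mono_null (subset_toMeasurable ν s) h)
    have hK : ∫⁻ y in A, klFun (μ.rnDeriv ρ y) (ν.rnDeriv ρ y) ∂ρ = ⊤ := by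
      by_contra hK
      have hfin := ae_lt_top (μ := ρ.restrict A) (measurable_klFun hmf hmg) hK
      have hg0 : ∀ᵐ y ∂ρ.restrict A, ν.rnDeriv ρ y = 0 :=
        (ae_restrict_iff' hA).mpr (rnDeriv_ae_zero_on hν hA hνA)
      have hf0 : ∀ᵐ y ∂ρ.restrict A, μ.rnDeriv ρ y = 0 := by
        filter_upwards [hfin, hg0] with y h1 h2
        by_contra hf
        rw [klFun, if_neg hf, if_pos h2] at h1
        exact absurd h1 (lt_irrefl ⊤)
      have : μ A = 0 := by
        calc μ A = ∫⁻ y in A, μ.rnDeriv ρ y ∂ρ := (Measure.setLIntegral_rnDeriv hμ A).symm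
        _ = ∫⁻ y in A, (0 : ℝ≥0∞) ∂ρ := lintegral_congr_ae hf0
        _ = 0 := by simp
      exact hμA this
    have hKtop : ∫⁻ y, klFun (μ.rnDeriv ρ y) (ν.rnDeriv ρ y) ∂ρ = ⊤ :=
      top_le_iff.mp (hK ▸ setLIntegral_le_lintegral A _)
    rw [hKtop, EReal.coe_ennreal_top, EReal.top_add_coe]


lemma ennreal_le_of_add_lt {x : ℝ≥0∞} {c r : ℝ}
    (h : (x : EReal) + (c : ℝ) < (r : ℝ)) : x ≤ ENNReal.ofReal (r - c) := by
  rcases eq_or_ne x ⊤ with rfl | hx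
  · rw [EReal.coe_ennreal_top, EReal.top_add_coe] at h
    exact absurd h (by simp)
  · rw [coe_ennreal_eq hx, ← EReal.coe_add] at h
    have h' : x.toReal + c < r := by exact_mod_cast h
    rcases le_or_gt x (ENNReal.ofReal (r - c)) with h'' | h''
    · exact h''
    · exact ((ENNReal.le_ofReal_iff_toReal_le hx (by linarith [ENNReal.toReal_nonneg (a := x)])).mpr
        (by linarith)).trans le_rfl

lemma rpow_tendsto {a : ℝ} (ha : 0 < a) {f : ℝ≥0∞} (hf : f ≠ ⊤) {zs : ℕ → ℝ≥0∞} {z : ℝ≥0∞}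
    (h : Tendsto zs atTop (𝓝 z)) :
    Tendsto (fun k => f ^ a * zs k ^ (1 - a)) atTop (𝓝 (f ^ a * z ^ (1 - a))) := by
  rcases eq_or_ne f 0 with rfl | hf0
  · simp only [ENNReal.zero_rpow_of_pos ha, zero_mul]
    exact tendsto_const_nhds
  · have hfa : f ^ a ≠ ⊤ := by
      rw [Ne, ENNReal.rpow_eq_top_iff]
      push_neg
      exact ⟨fun h => absurd h hf0, fun h => absurd h hf⟩
    exact ENNReal.Tendsto.const_mul ((ENNReal.continuous_rpow_const.tendsto z).comp h)
      (Or.inr hfa)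

lemma rpow_mul_le_add {a : ℝ} (ha0 : 0 < a) (ha1 : a < 1) (x z : ℝ≥0∞) :
    x ^ a * z ^ (1 - a) ≤ x + z := by
  have hmle : max x z ≤ x + z := max_le le_self_add le_add_self
  have h1 : x ^ a * z ^ (1 - a) ≤ (max x z) ^ a * (max x z) ^ (1 - a) :=
    mul_le_mul' (ENNReal.rpow_le_rpow (le_max_left _ _) ha0.le)
      (ENNReal.rpow_le_rpow (le_max_right _ _) (by linarith))
  refine h1.trans ?_
  rcases eq_or_ne (max x z) 0 with hm | hm
  · rw [hm, ENNReal.zero_rpow_of_pos ha0, zero_mul]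
    exact zero_le
  rcases eq_or_ne (max x z) ⊤ with hm' | hm'
  · rw [hm'] at hmle ⊢
    exact le_trans le_top hmle
  · rw [← ENNReal.rpow_add _ _ hm hm']
    simpa using hmle

lemma exists_subseq_ae_tendsto {ρ : Measure Y} [IsFiniteMeasure ρ]
    {g : ℕ → Y → ℝ≥0∞} {g' : Y → ℝ≥0∞}
    (hgm : ∀ n, Measurable (g n)) (hg'm : Measurable g') (hg'int : ∫⁻ y, g' y ∂ρ ≠ ⊤)
    (hconv : Tendsto (fun n => ∫⁻ y, dd (g n y) (g' y) ∂ρ) atTop (𝓝 0)) :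
    ∃ φ : ℕ → ℕ, StrictMono φ ∧
      (∃ h : Y → ℝ≥0∞, Measurable h ∧ ∫⁻ y, h y ∂ρ ≠ ⊤ ∧ ∀ k, ∀ y, g (φ k) y ≤ h y) ∧
      ∀ᵐ y ∂ρ, Tendsto (fun k => g (φ k) y) atTop (𝓝 (g' y)) := by
  have hev : ∀ k : ℕ, ∀ᶠ n in atTop, ∫⁻ y, dd (g n y) (g' y) ∂ρ < (2⁻¹ : ℝ≥0∞) ^ k :=
    fun k => hconv.eventually_lt_const (ENNReal.pow_pos (by simp) k)
  obtain ⟨φ, hφ, hφP⟩ := Filter.extraction_forall_of_eventually hev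
  set D : ℕ → Y → ℝ≥0∞ := fun k y => dd (g (φ k) y) (g' y) with hD
  have hDmeas : ∀ k, Measurable (D k) := fun k => measurable_dd (hgm _) hg'm
  have hsum : ∫⁻ y, ∑' k, D k y ∂ρ ≠ ⊤ := by
    rw [lintegral_tsum (fun k => (hDmeas k).aemeasurable)]
    refine ne_top_of_le_ne_top ?_ (ENNReal.tsum_le_tsum fun k => (hφP k).le)
    rw [ENNReal.tsum_geometric]
    simp [ENNReal.one_sub_inv_two]
  refine ⟨φ, hφ, ⟨fun y => g' y + ∑' k, D k y,
    hg'm.add (Measurable.ennreal_tsum hDmeas), ?_, ?_⟩, ?_⟩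
  · rw [lintegral_add_left hg'm]
    exact ENNReal.add_ne_top.mpr ⟨hg'int, hsum⟩
  · intro k y
    calc g (φ k) y ≤ g' y + D k y := le_add_dd _ _
    _ ≤ _ := add_le_add_right (ENNReal.le_tsum k) _
  · have h1 : ∀ᵐ y ∂ρ, ∑' k, D k y < ⊤ := ae_lt_top (Measurable.ennreal_tsum hDmeas) hsum
    have h2 : ∀ᵐ y ∂ρ, g' y < ⊤ := ae_lt_top hg'm hg'int
    filter_upwards [h1, h2] with y hy1 hy2
    have hD0 : Tendsto (fun k => D k y) atTop (𝓝 0) := by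
      have := ENNReal.tendsto_cofinite_zero_of_tsum_ne_top hy1.ne
      rwa [Nat.cofinite_eq_atTop] at this
    have hup : Tendsto (fun k => g' y + D k y) atTop (𝓝 (g' y)) := by
      have := Tendsto.add (tendsto_const_nhds (x := g' y) (f := atTop)) hD0
      simpa using this
    have hlo : Tendsto (fun k => g' y - D k y) atTop (𝓝 (g' y)) := by
      have := ENNReal.Tendsto.sub (tendsto_const_nhds (x := g' y) (f := atTop)) hD0
        (Or.inl hy2.ne)
      simpa using this
    refine tendsto_of_tendsto_of_tendsto_of_le_of_le hlo hup (fun k => ?_) (fun k => ?_)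
    · rw [tsub_le_iff_right]
      exact (le_add_dd _ _).trans_eq (by rw [hD, dd_comm])
    · exact le_add_dd _ _

lemma klFun_le_liminf {x z : ℝ≥0∞} (hx : x ≠ ⊤) (hz : z ≠ ⊤) {zs : ℕ → ℝ≥0∞}
    (h : Tendsto zs atTop (𝓝 z)) :
    klFun x z ≤ liminf (fun k => klFun x (zs k)) atTop := by
  by_cases hx0 : x = 0
  · have heq : (fun k => klFun x (zs k)) = zs := funext fun k => by rw [klFun, if_pos hx0]
    rw [klFun, if_pos hx0, heq, h.liminf_eq]
  by_cases hz0 : z = 0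
  · rw [klFun, if_neg hx0, if_pos hz0]
    rw [top_le_iff]
    refine eq_top_of_forall_ofReal_le fun M => ?_
    set xr := x.toReal with hxr_def
    have hxr : 0 < xr := ENNReal.toReal_pos hx0 hx
    set δ : ℝ := Real.exp ((xr * Real.log xr - xr - M) / xr) with hδ_def
    have hδ : 0 < δ := Real.exp_pos _
    have hev : ∀ᶠ k in atTop, zs k < ENNReal.ofReal δ := by
      refine h.eventually_lt_const ?_
      rw [hz0]
      exact ENNReal.ofReal_pos.mpr hδ
    refine le_liminf_of_le (by isBoundedDefault) (hev.mono fun k hk => ?_)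
    by_cases hzk : zs k = 0
    · rw [klFun, if_neg hx0, if_pos hzk]; exact le_top
    · rw [klFun, if_neg hx0, if_neg hzk]
      apply ENNReal.ofReal_le_ofReal
      have hzkfin : zs k ≠ ⊤ := (hk.trans ENNReal.ofReal_lt_top).ne
      have ht : 0 < (zs k).toReal := ENNReal.toReal_pos hzk hzkfin
      have htδ : (zs k).toReal ≤ δ := ENNReal.toReal_le_of_le_ofReal hδ.le hk.le
      have hlog : Real.log (zs k).toReal ≤ (xr * Real.log xr - xr - M) / xr :=
        (Real.log_le_log ht htδ).trans_eq (Real.log_exp _)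
      have hexpand : Real.log (xr / (zs k).toReal) = Real.log xr - Real.log (zs k).toReal :=
        Real.log_div hxr.ne' ht.ne'
      rw [hexpand]
      have hmul : xr * Real.log (zs k).toReal ≤ xr * Real.log xr - xr - M := by
        have h2 := mul_le_mul_of_nonneg_left hlog hxr.le
        rwa [mul_div_cancel₀ _ hxr.ne'] at h2
      nlinarith [ht.le]
  · have hzt : Tendsto (fun k => (zs k).toReal) atTop (𝓝 z.toReal) :=
      (ENNReal.tendsto_toReal hz).comp h
    have hzr : 0 < z.toReal := ENNReal.toReal_pos hz0 hz
    have hev1 : ∀ᶠ k in atTop, zs k ≠ 0 := h.eventually_ne hz0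
    have hev2 : ∀ᶠ k in atTop, zs k ≠ ⊤ := h.eventually_ne hz
    have hlim : Tendsto
        (fun k => x.toReal * Real.log (x.toReal / (zs k).toReal) - x.toReal + (zs k).toReal)
        atTop
        (𝓝 (x.toReal * Real.log (x.toReal / z.toReal) - x.toReal + z.toReal)) := by
      have hdiv : Tendsto (fun k => x.toReal / (zs k).toReal) atTop
          (𝓝 (x.toReal / z.toReal)) := tendsto_const_nhds.div hzt hzr.ne'
      have hlogc : Tendsto (fun k => Real.log (x.toReal / (zs k).toReal)) atTop
          (𝓝 (Real.log (x.toReal / z.toReal))) := by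
        rcases eq_or_ne x.toReal 0 with hxr | hxr
        · simp only [hxr, zero_div]
          exact tendsto_const_nhds
        · exact (Real.continuousAt_log (div_ne_zero hxr hzr.ne')).tendsto.comp hdiv
      exact ((tendsto_const_nhds.mul hlogc).sub tendsto_const_nhds).add hzt
    have key : Tendsto (fun k => klFun x (zs k)) atTop (𝓝 (klFun x z)) := by
      rw [klFun, if_neg hx0, if_neg hz0]
      refine Tendsto.congr' ?_ ((ENNReal.continuous_ofReal.tendsto _).comp hlim)
      filter_upwards [hev1, hev2] with k h1 h2
      rw [klFun, if_neg hx0, if_neg h1]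
      rfl
    exact le_of_eq key.liminf_eq.symm


end RenyiAux

open RenyiAux

/-- For every `α ∈ (0,∞]` and probability measure `μ`, the map `ν ↦ D_α(μ‖ν)` on finite
measures is (sequentially) lower semicontinuous for the total variation norm topology. -/
theorem renyiDiv_lowerSemicontinuous_tv
    (α : ℝ≥0∞) (hα : 0 < α)
    (μ : Measure Y) [IsProbabilityMeasure μ]
    (ν : ℕ → Measure Y) (ν' : Measure Y)
    (hν : ∀ n, IsFiniteMeasure (ν n)) (hν' : IsFiniteMeasure ν')
    (hconv : Tendsto (fun n => tvDist (ν n) ν') atTop (nhds 0)) :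
    renyiDiv α μ ν' ≤ liminf (fun n => renyiDiv α μ (ν n)) atTop := by
  classical
  haveI := hν'
  -- A dominating finite measure
  set c : ℕ → ℝ≥0∞ := fun n => ((2 : ℝ≥0∞) ^ n * (ν n Set.univ + 1))⁻¹ with hc_def
  have hcmulbound : ∀ n, c n * ν n Set.univ ≤ (2⁻¹ : ℝ≥0∞) ^ n := by
    intro n
    haveI := hν n
    have h2n0 : ((2 : ℝ≥0∞) ^ n) ≠ 0 := pow_ne_zero n (by simp)
    have h2nt : ((2 : ℝ≥0∞) ^ n) ≠ ⊤ := ENNReal.pow_ne_top (by simp)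
    have hm1 : (ν n Set.univ + 1) ≠ 0 := by simp
    have hmt : (ν n Set.univ + 1) ≠ ⊤ :=
      ENNReal.add_ne_top.mpr ⟨measure_ne_top _ _, ENNReal.one_ne_top⟩
    rw [hc_def]
    simp only
    rw [ENNReal.mul_inv (Or.inl h2n0) (Or.inl h2nt), mul_assoc]
    calc ((2 : ℝ≥0∞) ^ n)⁻¹ * ((ν n Set.univ + 1)⁻¹ * ν n Set.univ)
        ≤ ((2 : ℝ≥0∞) ^ n)⁻¹ * ((ν n Set.univ + 1)⁻¹ * (ν n Set.univ + 1)) := by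
          gcongr
          exact le_self_add
      _ = ((2 : ℝ≥0∞) ^ n)⁻¹ := by rw [ENNReal.inv_mul_cancel hm1 hmt, mul_one]
      _ = (2⁻¹ : ℝ≥0∞) ^ n := by rw [ENNReal.inv_pow]
  have hc0 : ∀ n, c n ≠ 0 := by
    intro n
    haveI := hν n
    rw [hc_def]
    simp only [Ne, ENNReal.inv_eq_zero]
    exact ENNReal.mul_ne_top (ENNReal.pow_ne_top (by simp))
      (ENNReal.add_ne_top.mpr ⟨measure_ne_top _ _, ENNReal.one_ne_top⟩)
  set ρ : Measure Y := μ + ν' + Measure.sum (fun n => c n • ν n) with hρ_def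
  have hsum_univ : (Measure.sum fun n => c n • ν n) Set.univ ≠ ⊤ := by
    rw [Measure.sum_apply _ MeasurableSet.univ]
    have hle : ∑' n, (c n • ν n) Set.univ ≤ ∑' n, (2⁻¹ : ℝ≥0∞) ^ n :=
      ENNReal.tsum_le_tsum fun n => by
        rw [Measure.smul_apply, smul_eq_mul]; exact hcmulbound n
    refine ne_top_of_le_ne_top ?_ hle
    rw [ENNReal.tsum_geometric]
    simp [ENNReal.one_sub_inv_two]
  haveI hρfin : IsFiniteMeasure ρ := by
    constructor
    rw [hρ_def, Measure.add_apply, Measure.add_apply]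
    exact ENNReal.add_lt_top.mpr ⟨ENNReal.add_lt_top.mpr ⟨measure_lt_top _ _,
      measure_lt_top _ _⟩, hsum_univ.lt_top⟩
  have hμρ : μ ≪ ρ :=
    Measure.absolutelyContinuous_of_le ((Measure.le_add_right (le_refl μ)).trans
      (Measure.le_add_right le_rfl))
  have hν'ρ : ν' ≪ ρ :=
    Measure.absolutelyContinuous_of_le ((Measure.le_add_left (le_refl ν')).trans
      (Measure.le_add_right le_rfl))
  have hνρ : ∀ n, ν n ≪ ρ := by
    intro n
    refine Measure.AbsolutelyContinuous.mk fun s hs h0 => ?_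
    rw [hρ_def, Measure.add_apply, Measure.add_apply] at h0
    have h3 : (Measure.sum fun n => c n • ν n) s = 0 := by
      simp only [add_eq_zero] at h0
      exact h0.2
    rw [Measure.sum_apply _ hs] at h3
    have h4 : (c n • ν n) s = 0 := by
      have := ENNReal.tsum_eq_zero.mp h3 n
      exact this
    rw [Measure.smul_apply, smul_eq_mul, mul_eq_zero] at h4
    exact h4.resolve_left (hc0 n)
  have hgint' : ∫⁻ y, ν'.rnDeriv ρ y ∂ρ ≠ ⊤ := by
    rw [Measure.lintegral_rnDeriv hν'ρ]
    exact measure_ne_top _ _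
  have heq : ∀ n, ENNReal.ofReal (tvDist (ν n) ν')
      = ∫⁻ y, dd ((ν n).rnDeriv ρ y) (ν'.rnDeriv ρ y) ∂ρ := by
    intro n
    haveI := hν n
    exact ofReal_tvDist (hνρ n) hν'ρ
  have hL1 : Tendsto (fun n => ∫⁻ y, dd ((ν n).rnDeriv ρ y) (ν'.rnDeriv ρ y) ∂ρ)
      atTop (𝓝 0) := by
    have h1 : Tendsto (fun n => ENNReal.ofReal (tvDist (ν n) ν')) atTop
        (𝓝 (ENNReal.ofReal 0)) := (ENNReal.continuous_ofReal.tendsto 0).comp hconv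
    rw [ENNReal.ofReal_zero] at h1
    exact h1.congr fun n => heq n
  by_contra hcon
  rw [not_le] at hcon
  obtain ⟨cE, h1, h2⟩ := exists_between hcon
  have hcE_ne_bot : cE ≠ ⊥ := fun h => absurd (h ▸ h1) (by simp)
  have hcE_ne_top : cE ≠ ⊤ := fun h => absurd (h ▸ h2) (by simp)
  obtain ⟨r, rfl⟩ : ∃ r : ℝ, cE = (r : EReal) :=
    ⟨cE.toReal, (EReal.coe_toReal hcE_ne_top hcE_ne_bot).symm⟩
  have hfreq : ∃ᶠ n in atTop, renyiDiv α μ (ν n) < (r : EReal) :=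
    Filter.frequently_lt_of_liminf_lt (by isBoundedDefault) h1
  obtain ⟨φ₁, hφ₁m, hφ₁⟩ := Filter.extraction_of_frequently_atTop hfreq
  have hL1' : Tendsto (fun k => ∫⁻ y, dd ((ν (φ₁ k)).rnDeriv ρ y) (ν'.rnDeriv ρ y) ∂ρ)
      atTop (𝓝 0) := hL1.comp hφ₁m.tendsto_atTop
  obtain ⟨φ₂, hφ₂m, ⟨B, hBmeas, hBint, hBdom⟩, hae⟩ :=
    exists_subseq_ae_tendsto (g := fun k => (ν (φ₁ k)).rnDeriv ρ) (g' := ν'.rnDeriv ρ)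
      (fun k => Measure.measurable_rnDeriv _ _) (Measure.measurable_rnDeriv _ _) hgint' hL1'
  set m : ℕ → ℕ := fun k => φ₁ (φ₂ k) with hm_def
  have hmlt : ∀ k, renyiDiv α μ (ν (m k)) < (r : EReal) := fun k => hφ₁ (φ₂ k)
  have hdomm : ∀ k, ∀ y, (ν (m k)).rnDeriv ρ y ≤ B y := fun k y => hBdom k y
  have haem : ∀ᵐ y ∂ρ, Tendsto (fun k => (ν (m k)).rnDeriv ρ y) atTop
      (𝓝 (ν'.rnDeriv ρ y)) := hae
  have hL1m : Tendsto (fun k => ∫⁻ y, dd ((ν (m k)).rnDeriv ρ y) (ν'.rnDeriv ρ y) ∂ρ)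
      atTop (𝓝 0) := hL1.comp (hφ₁m.comp hφ₂m).tendsto_atTop
  suffices hfin : renyiDiv α μ ν' ≤ (r : EReal) by
    exact absurd (h2.trans_le hfin) (lt_irrefl _)
  by_cases hα1 : α = 1
  · subst hα1
    have hkl' := kl_eq (ρ := ρ) hμρ hν'ρ
    have hklk : ∀ k, renyiDiv 1 μ (ν (m k))
        = ((∫⁻ y, klFun (μ.rnDeriv ρ y) ((ν (m k)).rnDeriv ρ y) ∂ρ : ℝ≥0∞) : EReal)
          + (((1 : ℝ) - (ν (m k) Set.univ).toReal : ℝ) : EReal) := by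
      intro k
      haveI := hν (m k)
      exact kl_eq hμρ (hνρ (m k))
    have hmass : Tendsto (fun k => ν (m k) Set.univ) atTop (𝓝 (ν' Set.univ)) := by
      have hup : ∀ k, ν (m k) Set.univ
          ≤ ν' Set.univ + ∫⁻ y, dd ((ν (m k)).rnDeriv ρ y) (ν'.rnDeriv ρ y) ∂ρ := by
        intro k
        haveI := hν (m k)
        calc ν (m k) Set.univ = ∫⁻ y, (ν (m k)).rnDeriv ρ y ∂ρ :=
              (Measure.lintegral_rnDeriv (hνρ (m k))).symm
        _ ≤ ∫⁻ y, (ν'.rnDeriv ρ y + dd ((ν (m k)).rnDeriv ρ y) (ν'.rnDeriv ρ y)) ∂ρ :=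
              lintegral_mono fun y => le_add_dd _ _
        _ = ν' Set.univ + ∫⁻ y, dd ((ν (m k)).rnDeriv ρ y) (ν'.rnDeriv ρ y) ∂ρ := by
              rw [lintegral_add_left (Measure.measurable_rnDeriv _ _),
                Measure.lintegral_rnDeriv hν'ρ]
      have hlo : ∀ k, ν' Set.univ - ∫⁻ y, dd ((ν (m k)).rnDeriv ρ y) (ν'.rnDeriv ρ y) ∂ρ
          ≤ ν (m k) Set.univ := by
        intro k
        haveI := hν (m k)
        rw [tsub_le_iff_right, add_comm]
        calc ν' Set.univ = ∫⁻ y, ν'.rnDeriv ρ y ∂ρ := (Measure.lintegral_rnDeriv hν'ρ).symm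
        _ ≤ ∫⁻ y, ((ν (m k)).rnDeriv ρ y + dd ((ν (m k)).rnDeriv ρ y) (ν'.rnDeriv ρ y)) ∂ρ :=
              lintegral_mono fun y => (le_add_dd _ _).trans_eq (by rw [dd_comm])
        _ = ∫⁻ y, dd ((ν (m k)).rnDeriv ρ y) (ν'.rnDeriv ρ y) ∂ρ + ν (m k) Set.univ := by
              rw [lintegral_add_left (Measure.measurable_rnDeriv _ _),
                Measure.lintegral_rnDeriv (hνρ (m k)), add_comm]
      have hupt : Tendsto (fun k => ν' Set.univ
          + ∫⁻ y, dd ((ν (m k)).rnDeriv ρ y) (ν'.rnDeriv ρ y) ∂ρ) atTop (𝓝 (ν' Set.univ)) := by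
        have := Tendsto.add (tendsto_const_nhds (x := ν' Set.univ) (f := atTop)) hL1m
        simpa using this
      have hlot : Tendsto (fun k => ν' Set.univ
          - ∫⁻ y, dd ((ν (m k)).rnDeriv ρ y) (ν'.rnDeriv ρ y) ∂ρ) atTop (𝓝 (ν' Set.univ)) := by
        have := ENNReal.Tendsto.sub (tendsto_const_nhds (x := ν' Set.univ) (f := atTop)) hL1m
          (Or.inl (measure_ne_top _ _))
        simpa using this
      exact tendsto_of_tendsto_of_tendsto_of_le_of_le hlot hupt hlo hup
    have hc't : Tendsto (fun k => (1 : ℝ) - (ν (m k) Set.univ).toReal) atTop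
        (𝓝 ((1 : ℝ) - (ν' Set.univ).toReal)) :=
      Tendsto.const_sub _ ((ENNReal.tendsto_toReal (measure_ne_top ν' _)).comp hmass)
    have hstep1 : ∀ k, (∫⁻ y, klFun (μ.rnDeriv ρ y) ((ν (m k)).rnDeriv ρ y) ∂ρ)
        ≤ ENNReal.ofReal (r - ((1 : ℝ) - (ν (m k) Set.univ).toReal)) := by
      intro k
      refine ennreal_le_of_add_lt ?_
      rw [← hklk k]
      exact hmlt k
    have hfatou : (∫⁻ y, klFun (μ.rnDeriv ρ y) (ν'.rnDeriv ρ y) ∂ρ)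
        ≤ liminf (fun k => ∫⁻ y, klFun (μ.rnDeriv ρ y) ((ν (m k)).rnDeriv ρ y) ∂ρ) atTop := by
      refine le_trans ?_ (lintegral_liminf_le fun k =>
        measurable_klFun (Measure.measurable_rnDeriv _ _) (Measure.measurable_rnDeriv _ _))
      refine lintegral_mono_ae ?_
      filter_upwards [haem, Measure.rnDeriv_lt_top μ ρ, Measure.rnDeriv_lt_top ν' ρ]
        with y hy hx hz
      exact klFun_le_liminf hx.ne hz.ne hy
    have hbound : liminf (fun k => ∫⁻ y, klFun (μ.rnDeriv ρ y) ((ν (m k)).rnDeriv ρ y) ∂ρ) atTop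
        ≤ ENNReal.ofReal (r - ((1 : ℝ) - (ν' Set.univ).toReal)) := by
      have ht : Tendsto (fun k => ENNReal.ofReal (r - ((1:ℝ) - (ν (m k) Set.univ).toReal)))
          atTop (𝓝 (ENNReal.ofReal (r - ((1:ℝ) - (ν' Set.univ).toReal)))) :=
        (ENNReal.continuous_ofReal.tendsto _).comp (Tendsto.const_sub r hc't)
      calc liminf (fun k => ∫⁻ y, klFun (μ.rnDeriv ρ y) ((ν (m k)).rnDeriv ρ y) ∂ρ) atTop
          ≤ liminf (fun k => ENNReal.ofReal (r - ((1:ℝ) - (ν (m k) Set.univ).toReal))) atTop :=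
            Filter.liminf_le_liminf (Filter.Eventually.of_forall hstep1)
        _ = ENNReal.ofReal (r - ((1:ℝ) - (ν' Set.univ).toReal)) := ht.liminf_eq
    have hc'r : (1:ℝ) - (ν' Set.univ).toReal ≤ r := by
      have hck : ∀ k, (1:ℝ) - (ν (m k) Set.univ).toReal ≤ r := by
        intro k
        have h3 := hmlt k
        rw [hklk k] at h3
        have h4 : (((1:ℝ) - (ν (m k) Set.univ).toReal : ℝ) : EReal) < (r : EReal) := by
          refine lt_of_le_of_lt ?_ h3
          conv_lhs => rw [← zero_add (((1:ℝ) - (ν (m k) Set.univ).toReal : ℝ) : EReal)]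
          exact add_le_add_left (EReal.coe_ennreal_nonneg _) _
        exact_mod_cast h4.le
      exact le_of_tendsto hc't (Filter.Eventually.of_forall hck)
    rw [hkl']
    have hK'le := hfatou.trans hbound
    have hK'ne : (∫⁻ y, klFun (μ.rnDeriv ρ y) (ν'.rnDeriv ρ y) ∂ρ) ≠ ⊤ :=
      (hK'le.trans_lt ENNReal.ofReal_lt_top).ne
    have htr : (∫⁻ y, klFun (μ.rnDeriv ρ y) (ν'.rnDeriv ρ y) ∂ρ).toReal
        ≤ r - ((1:ℝ) - (ν' Set.univ).toReal) :=
      ENNReal.toReal_le_of_le_ofReal (by linarith) hK'le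
    rw [coe_ennreal_eq hK'ne, ← EReal.coe_add]
    exact EReal.coe_le_coe_iff.mpr (by linarith)
  by_cases hαt : α = ⊤
  · subst hαt
    have h1ne : (⊤ : ℝ≥0∞) ≠ 1 := by simp
    have hrw : ∀ (ξ : Measure Y), IsFiniteMeasure ξ → ξ ≪ ρ → renyiDiv ⊤ μ ξ
        = ENNReal.log (essSup (fun y => μ.rnDeriv ρ y / ξ.rnDeriv ρ y) ρ) := by
      intro ξ hξ hξρ
      haveI := hξ
      rw [renyiDiv, if_neg h1ne, if_pos rfl, essSup_div_change hμρ hξρ]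
    set M : ℝ≥0∞ := EReal.exp (r : EReal) with hM_def
    have hM0 : M ≠ 0 := by simp [hM_def, Real.exp_pos]
    have hMt : M ≠ ⊤ := by simp [hM_def]
    have hess : ∀ k, essSup (fun y => μ.rnDeriv ρ y / (ν (m k)).rnDeriv ρ y) ρ < M := by
      intro k
      have h3 := hmlt k
      rw [hrw _ (hν (m k)) (hνρ (m k))] at h3
      have h4 := EReal.exp_lt_exp_iff.mpr h3
      rwa [ENNReal.exp_log] at h4
    have haeM : ∀ᵐ y ∂ρ, μ.rnDeriv ρ y ≤ M * ν'.rnDeriv ρ y := by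
      have hallk : ∀ᵐ y ∂ρ, ∀ k, μ.rnDeriv ρ y / (ν (m k)).rnDeriv ρ y < M :=
        ae_all_iff.mpr fun k => (_root_.ae_le_essSup).mono fun y hy =>
          lt_of_le_of_lt hy (hess k)
      filter_upwards [hallk, haem] with y hky hty
      have hklek : ∀ k, μ.rnDeriv ρ y ≤ M * (ν (m k)).rnDeriv ρ y := by
        intro k
        rcases eq_or_ne ((ν (m k)).rnDeriv ρ y) 0 with hz | hz
        · have h5 := hky k
          rw [hz] at h5
          rcases eq_or_ne (μ.rnDeriv ρ y) 0 with hf | hf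
          · rw [hf]; exact zero_le
          · rw [ENNReal.div_zero hf] at h5
            exact absurd (h5.trans_le le_top) (lt_irrefl _)
        · rcases eq_or_ne ((ν (m k)).rnDeriv ρ y) ⊤ with hzt | hzt
          · rw [hzt, ENNReal.mul_top hM0]; exact le_top
          · have h5 := (hky k).le
            rwa [ENNReal.div_le_iff hz hzt] at h5
      exact ge_of_tendsto (ENNReal.Tendsto.const_mul hty (Or.inr hMt))
        (Filter.Eventually.of_forall hklek)
    rw [hrw ν' hν' hν'ρ]
    have hessle : essSup (fun y => μ.rnDeriv ρ y / ν'.rnDeriv ρ y) ρ ≤ M := by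
      refine essSup_le_of_ae_le _ ?_
      filter_upwards [haeM] with y hy
      rcases eq_or_ne (ν'.rnDeriv ρ y) 0 with hz | hz
      · rw [hz, mul_zero] at hy
        rw [hz, le_zero_iff.mp hy, ENNReal.zero_div]
        exact zero_le
      · rcases eq_or_ne (ν'.rnDeriv ρ y) ⊤ with hzt | hzt
        · rw [hzt, ENNReal.div_top]; exact zero_le
        · rwa [ENNReal.div_le_iff hz hzt]
    have := ENNReal.log_le_log_iff.mpr hessle
    rwa [hM_def, EReal.log_exp] at this
  · have ha0 : 0 < α.toReal := ENNReal.toReal_pos hα.ne' hαt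
    have hrw : ∀ (ξ : Measure Y), IsFiniteMeasure ξ → ξ ≪ ρ → renyiDiv α μ ξ
        = (((α.toReal - 1)⁻¹ : ℝ) : EReal) * ENNReal.log
            (∫⁻ y, μ.rnDeriv ρ y ^ α.toReal * ξ.rnDeriv ρ y ^ (1 - α.toReal) ∂ρ) := by
      intro ξ hξ hξρ
      haveI := hξ
      rw [renyiDiv, if_neg hα1, if_neg hαt, lintegral_rpow_change ha0 hμρ hξρ]
    have hmeask : ∀ k : ℕ, Measurable fun y =>
        μ.rnDeriv ρ y ^ α.toReal * (ν (m k)).rnDeriv ρ y ^ (1 - α.toReal) := fun k =>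
      (ENNReal.continuous_rpow_const.measurable.comp (Measure.measurable_rnDeriv _ _)).mul
        (ENNReal.continuous_rpow_const.measurable.comp (Measure.measurable_rnDeriv _ _))
    have hptw : ∀ᵐ y ∂ρ, Tendsto
        (fun k => μ.rnDeriv ρ y ^ α.toReal * (ν (m k)).rnDeriv ρ y ^ (1 - α.toReal))
        atTop (𝓝 (μ.rnDeriv ρ y ^ α.toReal * ν'.rnDeriv ρ y ^ (1 - α.toReal))) := by
      filter_upwards [haem, Measure.rnDeriv_lt_top μ ρ] with y hy hx
      exact rpow_tendsto ha0 hx.ne hy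
    have hmltk : ∀ k, (((α.toReal - 1)⁻¹ : ℝ) : EReal) * ENNReal.log
        (∫⁻ y, μ.rnDeriv ρ y ^ α.toReal * (ν (m k)).rnDeriv ρ y ^ (1 - α.toReal) ∂ρ)
          < (r : EReal) := by
      intro k
      have h3 := hmlt k
      rwa [hrw _ (hν (m k)) (hνρ (m k))] at h3
    rw [hrw ν' hν' hν'ρ]
    rcases Ne.lt_or_gt hα1 with hlt | hgt
    · -- α < 1
      have ha1 : α.toReal < 1 := by
        have h4 := (ENNReal.toReal_lt_toReal hαt ENNReal.one_ne_top).mpr hlt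
        simpa using h4
      have hd : (0 : ℝ) < (1 - α.toReal)⁻¹ := inv_pos.mpr (by linarith)
      have hd0 : (0 : EReal) < (((1 - α.toReal)⁻¹ : ℝ) : EReal) := by exact_mod_cast hd
      have hcoe : (((α.toReal - 1)⁻¹ : ℝ) : EReal) = -((((1 - α.toReal)⁻¹ : ℝ)) : EReal) := by
        rw [← EReal.coe_neg]
        norm_cast
        rw [show (1 - α.toReal) = -(α.toReal - 1) by ring, inv_neg, neg_neg]
      have hIk : ∀ k, EReal.exp (((-r : ℝ) : EReal) / (((1 - α.toReal)⁻¹ : ℝ) : EReal))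
          ≤ ∫⁻ y, μ.rnDeriv ρ y ^ α.toReal * (ν (m k)).rnDeriv ρ y ^ (1 - α.toReal) ∂ρ := by
        intro k
        have h3 := hmltk k
        rw [hcoe, EReal.neg_mul] at h3
        have h4 : ((-r : ℝ) : EReal) ≤ (((1 - α.toReal)⁻¹ : ℝ) : EReal) * ENNReal.log
            (∫⁻ y, μ.rnDeriv ρ y ^ α.toReal * (ν (m k)).rnDeriv ρ y ^ (1 - α.toReal) ∂ρ) := by
          rw [EReal.coe_neg]
          exact EReal.neg_le.mpr h3.le
        have h5 := (EReal.div_le_iff_le_mul hd0 (EReal.coe_ne_top _)).mpr h4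
        have h6 := EReal.exp_le_exp_iff.mpr h5
        rwa [ENNReal.exp_log] at h6
      have hdct : Tendsto
          (fun k => ∫⁻ y, μ.rnDeriv ρ y ^ α.toReal * (ν (m k)).rnDeriv ρ y ^ (1 - α.toReal) ∂ρ)
          atTop (𝓝 (∫⁻ y, μ.rnDeriv ρ y ^ α.toReal * ν'.rnDeriv ρ y ^ (1 - α.toReal) ∂ρ)) := by
        refine tendsto_lintegral_of_dominated_convergence (fun y => μ.rnDeriv ρ y + B y)
          hmeask ?_ ?_ hptw
        · intro k
          refine ae_of_all _ fun y => ?_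
          calc μ.rnDeriv ρ y ^ α.toReal * (ν (m k)).rnDeriv ρ y ^ (1 - α.toReal)
              ≤ μ.rnDeriv ρ y ^ α.toReal * B y ^ (1 - α.toReal) :=
                mul_le_mul_right (ENNReal.rpow_le_rpow (hdomm k y) (by linarith)) _
            _ ≤ μ.rnDeriv ρ y + B y := rpow_mul_le_add ha0 ha1 _ _
        · rw [lintegral_add_left (Measure.measurable_rnDeriv _ _)]
          refine ENNReal.add_ne_top.mpr ⟨?_, hBint⟩
          rw [Measure.lintegral_rnDeriv hμρ]
          exact measure_ne_top _ _
      have hI'ge : EReal.exp (((-r : ℝ) : EReal) / (((1 - α.toReal)⁻¹ : ℝ) : EReal))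
          ≤ ∫⁻ y, μ.rnDeriv ρ y ^ α.toReal * ν'.rnDeriv ρ y ^ (1 - α.toReal) ∂ρ :=
        ge_of_tendsto hdct (Filter.Eventually.of_forall hIk)
      have h7 : ((-r : ℝ) : EReal) / (((1 - α.toReal)⁻¹ : ℝ) : EReal)
          ≤ ENNReal.log (∫⁻ y, μ.rnDeriv ρ y ^ α.toReal * ν'.rnDeriv ρ y ^ (1 - α.toReal) ∂ρ) := by
        have h8 := ENNReal.log_le_log_iff.mpr hI'ge
        rwa [EReal.log_exp] at h8
      have h8 := (EReal.div_le_iff_le_mul hd0 (EReal.coe_ne_top _)).mp h7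
      rw [hcoe, EReal.neg_mul]
      refine EReal.neg_le.mpr ?_
      rw [← EReal.coe_neg]
      exact h8
    · -- 1 < α
      have ha1 : 1 < α.toReal := by
        have h4 := (ENNReal.toReal_lt_toReal ENNReal.one_ne_top hαt).mpr hgt
        simpa using h4
      have hc0' : (0 : EReal) < (((α.toReal - 1)⁻¹ : ℝ) : EReal) := by
        exact_mod_cast inv_pos.mpr (by linarith : (0:ℝ) < α.toReal - 1)
      have hIk : ∀ k, (∫⁻ y, μ.rnDeriv ρ y ^ α.toReal * (ν (m k)).rnDeriv ρ y ^ (1 - α.toReal) ∂ρ)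
          ≤ EReal.exp ((r : EReal) / (((α.toReal - 1)⁻¹ : ℝ) : EReal)) := by
        intro k
        have h3 := (hmltk k).le
        rw [EReal.mul_comm] at h3
        have h5 := (EReal.le_div_iff_mul_le hc0' (EReal.coe_ne_top _)).mpr h3
        have h6 := EReal.exp_le_exp_iff.mpr h5
        rwa [ENNReal.exp_log] at h6
      have hfatou : (∫⁻ y, μ.rnDeriv ρ y ^ α.toReal * ν'.rnDeriv ρ y ^ (1 - α.toReal) ∂ρ)
          ≤ liminf (fun k =>
            ∫⁻ y, μ.rnDeriv ρ y ^ α.toReal * (ν (m k)).rnDeriv ρ y ^ (1 - α.toReal) ∂ρ) atTop := by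
        refine le_trans ?_ (lintegral_liminf_le hmeask)
        refine lintegral_mono_ae ?_
        filter_upwards [hptw] with y hy
        exact le_of_eq hy.liminf_eq.symm
      have hIle : liminf (fun k =>
          ∫⁻ y, μ.rnDeriv ρ y ^ α.toReal * (ν (m k)).rnDeriv ρ y ^ (1 - α.toReal) ∂ρ) atTop
            ≤ EReal.exp ((r : EReal) / (((α.toReal - 1)⁻¹ : ℝ) : EReal)) :=
        Filter.liminf_le_of_frequently_le (Filter.Frequently.of_forall hIk)
      have h7 : ENNReal.log (∫⁻ y, μ.rnDeriv ρ y ^ α.toReal * ν'.rnDeriv ρ y ^ (1 - α.toReal) ∂ρ)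
          ≤ (r : EReal) / (((α.toReal - 1)⁻¹ : ℝ) : EReal) := by
        have h8 := ENNReal.log_le_log_iff.mpr (hfatou.trans hIle)
        rwa [EReal.log_exp] at h8
      have h8 := (EReal.le_div_iff_mul_le hc0' (EReal.coe_ne_top _)).mp h7
      rwa [EReal.mul_comm] at h8
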